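/- arXiv:1703.04822 — 3 statements merged into one kernel-verified Lean document; each statement's English description precedes it below -/
import Mathlib

section
/- Consider linear systems x⁺ = Ax + Bu, y = Cx and z⁺ = Fz + Gv, w = Hz. Suppose M is symmetric positive definite with M ≥ CᵀC and (A+BK)ᵀM(A+BK) ≤ λ²M for some λ ∈ (0,1), and suppose P, Q satisfy PF = AP + BQ and H = CP. Define V(z,x) = √((x−Pz)ᵀM(x−Pz)) and the interface u = Rv + Qz + K(x−Pz). Then: (i) V(z,x) ≥ ‖Cx − Hz‖ for all z, x; (ii) for all v, z, x, V(Fz+Gv, Ax+Bu) ≤ λ V(z,x) + ‖√M (BR−PG) v‖. -/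
open Matrix

open scoped ComplexOrder in
/-- The positive semidefinite square root of a positive semidefinite matrix
(the definition removed from Mathlib, restored verbatim). -/
noncomputable def Matrix.PosSemidef.sqrt {n : Type*} [Fintype n] [DecidableEq n]
    {𝕜 : Type*} [RCLike 𝕜] {A : Matrix n n 𝕜} (hA : A.PosSemidef) : Matrix n n 𝕜 :=
  hA.1.eigenvectorUnitary.1 * diagonal ((↑) ∘ Real.sqrt ∘ hA.1.eigenvalues) *
  (star hA.1.eigenvectorUnitary : Matrix n n 𝕜)

/-!
Everything is a statement about the tracking error `e = x − Pz`. The intertwining relation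
`PF = AP + BQ` makes the interface cancel the drift of the model, so that
`e⁺ = (A + BK) e + (BR − PG) v`. Now `V` is the seminorm `e ↦ √(eᵀMe) = ‖√M e‖`: it dominates
`‖Ce‖ = ‖Cx − Hz‖` because `M ≥ CᵀC`, it contracts by `λ` along `A + BK` because
`(A+BK)ᵀM(A+BK) ≤ λ²M`, and the triangle inequality for `‖√M ·‖` splits off the input term.
-/

theorem sqrt_dotProduct_self_eq_norm {ι : Type*} [Fintype ι] (a : ι → ℝ) :
    √(a ⬝ᵥ a) = ‖WithLp.toLp 2 a‖ := by
  rw [EuclideanSpace.norm_eq]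
  simp [dotProduct, sq]

theorem sqrt_dotProduct_self_add_le {ι : Type*} [Fintype ι] (a b : ι → ℝ) :
    √((a + b) ⬝ᵥ (a + b)) ≤ √(a ⬝ᵥ a) + √(b ⬝ᵥ b) := by
  simpa only [sqrt_dotProduct_self_eq_norm, WithLp.toLp_add] using norm_add_le _ _

namespace Matrix

variable {n : Type*} [Fintype n]

theorem dotProduct_transpose_mul_mul_mulVec {m R : Type*} [Fintype m] [CommSemiring R]
    (T : Matrix m n R) (M : Matrix m m R) (x : n → R) :
    x ⬝ᵥ (Tᵀ * M * T) *ᵥ x = (T *ᵥ x) ⬝ᵥ M *ᵥ (T *ᵥ x) := by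
  rw [← mulVec_mulVec, ← mulVec_mulVec, dotProduct_mulVec x, vecMul_transpose]

theorem dotProduct_mulVec_le_of_posSemidef_sub {L N : Matrix n n ℝ} (h : (N - L).PosSemidef)
    (x : n → ℝ) : x ⬝ᵥ L *ᵥ x ≤ x ⬝ᵥ N *ᵥ x := by
  have := h.dotProduct_mulVec_nonneg x
  rw [star_trivial, sub_mulVec, dotProduct_sub] at this
  linarith

theorem sqrt_dotProduct_mulVec_le_of_posSemidef_sub {k : Type*} [Fintype k]
    {C : Matrix k n ℝ} {M : Matrix n n ℝ} (h : (M - Cᵀ * C).PosSemidef) (x : n → ℝ) :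
    √((C *ᵥ x) ⬝ᵥ (C *ᵥ x)) ≤ √(x ⬝ᵥ M *ᵥ x) := by
  have hCC : (C *ᵥ x) ⬝ᵥ (C *ᵥ x) = x ⬝ᵥ (Cᵀ * C) *ᵥ x := by
    rw [← mulVec_mulVec, dotProduct_mulVec x, vecMul_transpose]
  exact Real.sqrt_le_sqrt (hCC ▸ dotProduct_mulVec_le_of_posSemidef_sub h x)

theorem sqrt_dotProduct_mulVec_le_of_contraction {M T : Matrix n n ℝ} {lam : ℝ}
    (h : (lam ^ 2 • M - Tᵀ * M * T).PosSemidef) (hlam : 0 ≤ lam) (x : n → ℝ) :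
    √((T *ᵥ x) ⬝ᵥ M *ᵥ (T *ᵥ x)) ≤ lam * √(x ⬝ᵥ M *ᵥ x) := by
  rw [← dotProduct_transpose_mul_mul_mulVec]
  calc √(x ⬝ᵥ (Tᵀ * M * T) *ᵥ x) ≤ √(x ⬝ᵥ (lam ^ 2 • M) *ᵥ x) :=
        Real.sqrt_le_sqrt (dotProduct_mulVec_le_of_posSemidef_sub h x)
    _ = lam * √(x ⬝ᵥ M *ᵥ x) := by
        rw [smul_mulVec, dotProduct_smul, smul_eq_mul, Real.sqrt_mul (sq_nonneg _),
          Real.sqrt_sq hlam]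

variable [DecidableEq n]

section RCLike

open scoped ComplexOrder

variable {𝕜 : Type*} [RCLike 𝕜] {A : Matrix n n 𝕜}

theorem PosSemidef.sqrt_mul_self (hA : A.PosSemidef) : hA.sqrt * hA.sqrt = A := by
  set U : Matrix n n 𝕜 := hA.1.eigenvectorUnitary.1
  set D : Matrix n n 𝕜 := diagonal ((↑) ∘ Real.sqrt ∘ hA.1.eigenvalues)
  have hU : star U * U = 1 := Unitary.coe_star_mul_self _
  have hD : D * D = diagonal (RCLike.ofReal ∘ hA.1.eigenvalues) := by
    rw [diagonal_mul_diagonal]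
    congr 1; funext i
    simp [← RCLike.ofReal_mul, Real.mul_self_sqrt (hA.eigenvalues_nonneg i)]
  calc hA.sqrt * hA.sqrt = U * D * (star U * U) * D * star U := by
        simp only [PosSemidef.sqrt, mul_assoc]; rfl
    _ = A := by
        rw [hU, mul_one, mul_assoc U D D, hD]
        conv_rhs => rw [hA.1.spectral_theorem, Unitary.conjStarAlgAut_apply]

theorem PosSemidef.conjTranspose_sqrt (hA : A.PosSemidef) : hA.sqrtᴴ = hA.sqrt := by
  simp [PosSemidef.sqrt, conjTranspose_mul, mul_assoc, star_eq_conjTranspose, Pi.star_def,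
    Function.comp_def]

end RCLike

section Real

variable {A : Matrix n n ℝ}

theorem PosSemidef.dotProduct_mulVec_eq_sqrt (hA : A.PosSemidef) (x : n → ℝ) :
    x ⬝ᵥ A *ᵥ x = (hA.sqrt *ᵥ x) ⬝ᵥ (hA.sqrt *ᵥ x) := by
  have hT : hA.sqrtᵀ = hA.sqrt := by
    simpa [conjTranspose_eq_transpose_of_trivial] using hA.conjTranspose_sqrt
  have hA' : A = hA.sqrtᵀ * 1 * hA.sqrt := by rw [mul_one, hT, hA.sqrt_mul_self]
  conv_lhs => rw [hA', dotProduct_transpose_mul_mul_mulVec, one_mulVec]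

theorem sqrt_dotProduct_mulVec_add_le (hA : A.PosSemidef) (x y : n → ℝ) :
    √((x + y) ⬝ᵥ A *ᵥ (x + y)) ≤ √(x ⬝ᵥ A *ᵥ x) + √(y ⬝ᵥ A *ᵥ y) := by
  rw [hA.dotProduct_mulVec_eq_sqrt, hA.dotProduct_mulVec_eq_sqrt x,
    hA.dotProduct_mulVec_eq_sqrt y, mulVec_add]
  exact sqrt_dotProduct_self_add_le _ _

end Real

end Matrix

theorem interface_error_step {R : Type*} [CommRing R] {n p m q : Type*} [Fintype n]
    [Fintype p] [Fintype m] [Fintype q] {A : Matrix n n R} {B : Matrix n p R}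
    {F : Matrix m m R} {P : Matrix n m R} {Q : Matrix p m R} (hPF : P * F = A * P + B * Q)
    (G : Matrix m q R) (K : Matrix p n R) (S : Matrix p q R) (v : q → R) (z : m → R)
    (x : n → R) :
    A *ᵥ x + B *ᵥ (S *ᵥ v + Q *ᵥ z + K *ᵥ (x - P *ᵥ z)) - P *ᵥ (F *ᵥ z + G *ᵥ v) =
      (A + B * K) *ᵥ (x - P *ᵥ z) + (B * S - P * G) *ᵥ v := by
  have hPFz : P *ᵥ (F *ᵥ z) = A *ᵥ (P *ᵥ z) + B *ᵥ (Q *ᵥ z) := by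
    rw [mulVec_mulVec, hPF, add_mulVec, mulVec_mulVec, mulVec_mulVec]
  simp only [mulVec_add, mulVec_sub, add_mulVec, sub_mulVec, ← mulVec_mulVec, hPFz]
  abel

theorem stmt_9_general (n p k m q : ℕ)
    (A : Matrix (Fin n) (Fin n) ℝ) (B : Matrix (Fin n) (Fin p) ℝ)
    (C : Matrix (Fin k) (Fin n) ℝ)
    (F : Matrix (Fin m) (Fin m) ℝ) (G : Matrix (Fin m) (Fin q) ℝ)
    (H : Matrix (Fin k) (Fin m) ℝ)
    (K : Matrix (Fin p) (Fin n) ℝ) (P : Matrix (Fin n) (Fin m) ℝ)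
    (Q : Matrix (Fin p) (Fin m) ℝ) (R : Matrix (Fin p) (Fin q) ℝ)
    (M : Matrix (Fin n) (Fin n) ℝ) (hM : M.PosDef) (lam : ℝ)
    (hlam0 : 0 < lam)
    (hMC : (M - Cᵀ * C).PosSemidef)
    (hcontr : (lam ^ 2 • M - (A + B * K)ᵀ * M * (A + B * K)).PosSemidef)
    (hPF : P * F = A * P + B * Q) (hH : H = C * P) :
    (∀ (z : Fin m → ℝ) (x : Fin n → ℝ),
      Real.sqrt ((C *ᵥ x - H *ᵥ z) ⬝ᵥ (C *ᵥ x - H *ᵥ z)) ≤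
        Real.sqrt ((x - P *ᵥ z) ⬝ᵥ M *ᵥ (x - P *ᵥ z))) ∧
    (∀ (v : Fin q → ℝ) (z : Fin m → ℝ) (x : Fin n → ℝ),
      let u := R *ᵥ v + Q *ᵥ z + K *ᵥ (x - P *ᵥ z)
      let z' := F *ᵥ z + G *ᵥ v
      let x' := A *ᵥ x + B *ᵥ u
      Real.sqrt ((x' - P *ᵥ z') ⬝ᵥ M *ᵥ (x' - P *ᵥ z')) ≤
        lam * Real.sqrt ((x - P *ᵥ z) ⬝ᵥ M *ᵥ (x - P *ᵥ z)) +
        Real.sqrt ((hM.posSemidef.sqrt *ᵥ ((B * R - P * G) *ᵥ v)) ⬝ᵥ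
          (hM.posSemidef.sqrt *ᵥ ((B * R - P * G) *ᵥ v)))) := by
  refine ⟨fun z x => ?_, fun v z x => ?_⟩
  · rw [hH, ← mulVec_mulVec, ← mulVec_sub]
    exact sqrt_dotProduct_mulVec_le_of_posSemidef_sub hMC _
  · dsimp only
    rw [interface_error_step hPF, ← hM.posSemidef.dotProduct_mulVec_eq_sqrt]
    calc _ ≤ _ := sqrt_dotProduct_mulVec_add_le hM.posSemidef _ _
      _ ≤ _ := by
        gcongr
        exact sqrt_dotProduct_mulVec_le_of_contraction hcontr hlam0.le _

/-- Simulation function and interface for linear systems: with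
`M ≥ CᵀC`, `(A+BK)ᵀM(A+BK) ≤ λ²M`, `PF = AP + BQ`, `H = CP`, and
`V(z,x) = √((x−Pz)ᵀM(x−Pz))`, the interface `u = Rv + Qz + K(x−Pz)` gives
(i) `V(z,x) ≥ ‖Cx − Hz‖`, and
(ii) `V(Fz+Gv, Ax+Bu) ≤ λ V(z,x) + ‖√M (BR−PG) v‖`. -/
theorem stmt_9 (n p k m q : ℕ)
    (A : Matrix (Fin n) (Fin n) ℝ) (B : Matrix (Fin n) (Fin p) ℝ)
    (C : Matrix (Fin k) (Fin n) ℝ)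
    (F : Matrix (Fin m) (Fin m) ℝ) (G : Matrix (Fin m) (Fin q) ℝ)
    (H : Matrix (Fin k) (Fin m) ℝ)
    (K : Matrix (Fin p) (Fin n) ℝ) (P : Matrix (Fin n) (Fin m) ℝ)
    (Q : Matrix (Fin p) (Fin m) ℝ) (R : Matrix (Fin p) (Fin q) ℝ)
    (M : Matrix (Fin n) (Fin n) ℝ) (hM : M.PosDef) (lam : ℝ)
    (hlam0 : 0 < lam) (hlam1 : lam < 1)
    (hMC : (M - Cᵀ * C).PosSemidef)
    (hcontr : (lam ^ 2 • M - (A + B * K)ᵀ * M * (A + B * K)).PosSemidef)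
    (hPF : P * F = A * P + B * Q) (hH : H = C * P) :
    (∀ (z : Fin m → ℝ) (x : Fin n → ℝ),
      Real.sqrt ((C *ᵥ x - H *ᵥ z) ⬝ᵥ (C *ᵥ x - H *ᵥ z)) ≤
        Real.sqrt ((x - P *ᵥ z) ⬝ᵥ M *ᵥ (x - P *ᵥ z))) ∧
    (∀ (v : Fin q → ℝ) (z : Fin m → ℝ) (x : Fin n → ℝ),
      let u := R *ᵥ v + Q *ᵥ z + K *ᵥ (x - P *ᵥ z)
      let z' := F *ᵥ z + G *ᵥ v
      let x' := A *ᵥ x + B *ᵥ u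
      Real.sqrt ((x' - P *ᵥ z') ⬝ᵥ M *ᵥ (x' - P *ᵥ z')) ≤
        lam * Real.sqrt ((x - P *ᵥ z) ⬝ᵥ M *ᵥ (x - P *ᵥ z)) +
        Real.sqrt ((hM.posSemidef.sqrt *ᵥ ((B * R - P * G) *ᵥ v)) ⬝ᵥ
          (hM.posSemidef.sqrt *ᵥ ((B * R - P * G) *ᵥ v)))) :=
  stmt_9_general n p k m q A B C F G H K P Q R M hM lam hlam0 hMC hcontr hPF hH
end

section
/- Let V: Z × X → ℝ≥0 satisfy, for a class K_∞ function α̂ with id − α̂ of class K, a class K function σ, a constant c ∈ (0,1], and a bound v_max ≥ 0: V(z⁺, x⁺) − V(z, x) ≤ −α̂(V(z,x)) + σ(v_max) along all transitions. Define b = α̂⁻¹(σ(v_max)/c). If V(z,x) ≤ b, then V(z⁺,x⁺) ≤ b (the sublevel set {V ≤ b} is forward invariant). -/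
/-- A class `K` function on `[0,∞)`: continuous, strictly increasing, vanishing at `0`. -/
def IsClassK (f : ℝ → ℝ) : Prop :=
  ContinuousOn f (Set.Ici 0) ∧ StrictMonoOn f (Set.Ici 0) ∧ f 0 = 0

/-- A class `K_∞` function: class `K` and unbounded. -/
def IsClassKInf (f : ℝ → ℝ) : Prop :=
  IsClassK f ∧ Filter.Tendsto f Filter.atTop Filter.atTop

namespace IsClassK

variable {f : ℝ → ℝ}

theorem monotoneOn (hf : IsClassK f) : MonotoneOn f (Set.Ici 0) :=
  hf.2.1.monotoneOn

theorem nonneg (hf : IsClassK f) {s : ℝ} (hs : 0 ≤ s) : 0 ≤ f s := by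
  simpa only [hf.2.2] using hf.monotoneOn Set.self_mem_Ici hs hs

end IsClassK

theorem le_of_sub_le_neg_add_mul {α : ℝ → ℝ} (hα : IsClassK α)
    (hid : IsClassK (fun s => s - α s)) {c s b v : ℝ} (hc1 : c ≤ 1) (hs : 0 ≤ s)
    (hsb : s ≤ b) (hv : v - s ≤ -α s + c * α b) : v ≤ b := by
  have hdecr : s - α s ≤ b - α b := hid.monotoneOn hs (hs.trans hsb) hsb
  have hαb : 0 ≤ α b := hα.nonneg (hs.trans hsb)
  calc v ≤ (s - α s) + c * α b := by linarith
    _ ≤ (b - α b) + 1 * α b := by gcongr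
    _ = b := by ring

theorem stmt_11_general {Z X : Type*} (V : Z × X → ℝ) (hVnn : ∀ pr, 0 ≤ V pr)
    (αhat σ : ℝ → ℝ) (hα : IsClassKInf αhat)
    (hid : IsClassK (fun s => s - αhat s))
    (c : ℝ) (hc1 : c ≤ 1) (vmax : ℝ)
    (b : ℝ) (hb : c * αhat b = σ vmax)
    (z : Z) (x : X) (z' : Z) (x' : X)
    (hstep : V (z', x') - V (z, x) ≤ -αhat (V (z, x)) + σ vmax)
    (hin : V (z, x) ≤ b) :
    V (z', x') ≤ b :=
  le_of_sub_le_neg_add_mul hα.1 hid hc1 (hVnn _) hin (hb ▸ hstep)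

/-- Forward invariance of the sublevel set `{V ≤ b}` with `b = α̂⁻¹(σ(v_max)/c)`:
if `V(z⁺,x⁺) − V(z,x) ≤ −α̂(V(z,x)) + σ(v_max)` and `V(z,x) ≤ b`, then
`V(z⁺,x⁺) ≤ b`. -/
theorem stmt_11 {Z X : Type*} (V : Z × X → ℝ) (hVnn : ∀ pr, 0 ≤ V pr)
    (αhat σ : ℝ → ℝ) (hα : IsClassKInf αhat)
    (hid : IsClassK (fun s => s - αhat s)) (hσ : IsClassK σ)
    (c : ℝ) (hc0 : 0 < c) (hc1 : c ≤ 1) (vmax : ℝ) (hv : 0 ≤ vmax)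
    (b : ℝ) (hb0 : 0 ≤ b) (hb : c * αhat b = σ vmax)
    (z : Z) (x : X) (z' : Z) (x' : X)
    (hstep : V (z', x') - V (z, x) ≤ -αhat (V (z, x)) + σ vmax)
    (hin : V (z, x) ≤ b) :
    V (z', x') ≤ b :=
  stmt_11_general V hVnn αhat σ hα hid c hc1 vmax b hb z x z' x' hstep hin
end

section
/- If Σ₂ approximately simulates Σ₁ with precision ε (i.e., there exists an ε-approximate simulation relation R of Σ₁ by Σ₂ such that every initial state of Σ₁ is related to some initial state of Σ₂), then every output trajectory of Σ₁ (an infinite sequence y₁: ℕ → Y generated by some infinite run of Σ₁ from an initial state) is pointwise within distance ε of some output trajectory of Σ₂: there exists y₂ in the output behavior of Σ₂ with d(y₁(t), y₂(t)) ≤ ε for all t ∈ ℕ. -/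
/-!
The simulation relation lets every step of a run of `Σ₁` be answered by a step of `Σ₂` that
stays related, so choosing these answers one after another (dependent choice along the run)
produces a run of `Σ₂` related to the given one at every time; related states have outputs
within `ε`.
-/

/-- A transition system with states `X`, inputs `U`, initial states, a transition
relation, and an output map into a metric space `Y`. -/
structure TransSys (X U Y : Type*) where
  init : Set X
  tr : X → U → X → Prop
  out : X → Y

/-- `R` is an `ε`-approximate simulation relation of `Σ₁` by `Σ₂`. -/
def IsApproxSim {X₁ U₁ X₂ U₂ Y : Type*} [MetricSpace Y]
    (S₁ : TransSys X₁ U₁ Y) (S₂ : TransSys X₂ U₂ Y) (ε : ℝ)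
    (R : Set (X₁ × X₂)) : Prop :=
  (∀ pr ∈ R, dist (S₁.out pr.1) (S₂.out pr.2) ≤ ε) ∧
  (∀ pr ∈ R, ∀ u₁ x₁', S₁.tr pr.1 u₁ x₁' →
    ∃ u₂ x₂', S₂.tr pr.2 u₂ x₂' ∧ (x₁', x₂') ∈ R)

theorem exists_run_of_forall_exists_step {X U : Type*} (tr : X → U → X → Prop)
    (P : ℕ → X → Prop) (step : ∀ t x, P t x → ∃ u x', tr x u x' ∧ P (t + 1) x')
    {x₀ : X} (h₀ : P 0 x₀) :
    ∃ (x : ℕ → X) (u : ℕ → U),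
      x 0 = x₀ ∧ (∀ t, tr (x t) (u t) (x (t + 1))) ∧ ∀ t, P t (x t) := by
  choose u next htr hnext using step
  let s : ∀ t, {x // P t x} :=
    fun t => Nat.rec ⟨x₀, h₀⟩ (fun t p => ⟨next t p.1 p.2, hnext t p.1 p.2⟩) t
  exact ⟨fun t => (s t).1, fun t => u t (s t).1 (s t).2, rfl,
    fun t => htr t (s t).1 (s t).2, fun t => (s t).2⟩

theorem IsApproxSim.exists_related_run {X₁ U₁ X₂ U₂ Y : Type*} [MetricSpace Y]
    {S₁ : TransSys X₁ U₁ Y} {S₂ : TransSys X₂ U₂ Y} {ε : ℝ} {R : Set (X₁ × X₂)}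
    (hR : IsApproxSim S₁ S₂ ε R) {x₁ : ℕ → X₁} {u₁ : ℕ → U₁}
    (hrun₁ : ∀ t, S₁.tr (x₁ t) (u₁ t) (x₁ (t + 1))) {x₂₀ : X₂} (h₀ : (x₁ 0, x₂₀) ∈ R) :
    ∃ (x₂ : ℕ → X₂) (u₂ : ℕ → U₂), x₂ 0 = x₂₀ ∧
      (∀ t, S₂.tr (x₂ t) (u₂ t) (x₂ (t + 1))) ∧ ∀ t, (x₁ t, x₂ t) ∈ R :=
  exists_run_of_forall_exists_step S₂.tr (fun t x₂ => (x₁ t, x₂) ∈ R)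
    (fun t x₂ h => hR.2 (x₁ t, x₂) h (u₁ t) (x₁ (t + 1)) (hrun₁ t)) h₀

/-- If `Σ₂` approximately simulates `Σ₁` with precision `ε` (with the initial
state condition), then every output trajectory of `Σ₁` is pointwise within `ε`
of some output trajectory of `Σ₂`. -/
theorem stmt_18 {X₁ U₁ X₂ U₂ Y : Type*} [MetricSpace Y]
    (S₁ : TransSys X₁ U₁ Y) (S₂ : TransSys X₂ U₂ Y) (ε : ℝ)
    (R : Set (X₁ × X₂)) (hR : IsApproxSim S₁ S₂ ε R)
    (hinit : ∀ x₁ ∈ S₁.init, ∃ x₂ ∈ S₂.init, (x₁, x₂) ∈ R)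
    (x₁ : ℕ → X₁) (u₁ : ℕ → U₁) (hx₁0 : x₁ 0 ∈ S₁.init)
    (hrun₁ : ∀ t, S₁.tr (x₁ t) (u₁ t) (x₁ (t + 1))) :
    ∃ (x₂ : ℕ → X₂) (u₂ : ℕ → U₂),
      x₂ 0 ∈ S₂.init ∧
      (∀ t, S₂.tr (x₂ t) (u₂ t) (x₂ (t + 1))) ∧
      ∀ t, dist (S₁.out (x₁ t)) (S₂.out (x₂ t)) ≤ ε := by
  obtain ⟨x₂₀, hx₂₀, h₀⟩ := hinit _ hx₁0
  obtain ⟨x₂, u₂, rfl, hrun₂, hrel⟩ := hR.exists_related_run hrun₁ h₀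
  exact ⟨x₂, u₂, hx₂₀, hrun₂, fun t => hR.1 _ (hrel t)⟩
end
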